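/- Let D be a continuous probability distribution on ℝ² and q ∈ ℝ² a fixed point. For every ε > 0 there exists a finite family of cones with apex q, partitioning the plane, such that for each cone V in the family, Pr_{p ∼ D}[the line through q and p meets V \ {q}] ≤ 1/2. -/

import Mathlib

/-!
Parametrize the lines through `q` by an angle, so that the law of the line through `q` and a
random point `p ∼ D` becomes a probability measure on `ℝ`. Since every line through `q` is
`D`-null, this law has no atoms, so its distribution function is continuous and takes the
value `1/2` at some `t`. The two double cones of lines with angle `≤ t` and `> t` then
partition the plane, and each is hit by the random line with probability exactly `1/2`.
-/

open MeasureTheory ProbabilityTheory Set Complex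

lemma continuous_cdf_of_nullSingletonClass (μ : Measure ℝ) [IsProbabilityMeasure μ]
    [NullSingletonClass μ] : Continuous (cdf μ) := by
  refine continuous_iff_continuousAt.2 fun x => continuousAt_iff_continuous_left_right.2
    ⟨continuousWithinAt_Iio_iff_Iic.1 ?_, (cdf μ).right_continuous x⟩
  have hjump : ENNReal.ofReal (cdf μ x - Function.leftLim (cdf μ) x) = 0 := by
    rw [← StieltjesFunction.measure_singleton, measure_cdf, measure_singleton]
  refine (monotone_cdf μ).continuousWithinAt_Iio_iff_leftLim_eq.2 ?_
  have := (monotone_cdf μ).leftLim_le (le_refl x)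
  rw [ENNReal.ofReal_eq_zero] at hjump
  linarith

lemma exists_measure_Iic_eq_half (μ : Measure ℝ) [IsProbabilityMeasure μ]
    [NullSingletonClass μ] : ∃ t, μ (Iic t) = 1 / 2 ∧ μ (Ioi t) = 1 / 2 := by
  obtain ⟨a, ha⟩ := ((tendsto_cdf_atBot μ).eventually (gt_mem_nhds one_half_pos)).exists
  obtain ⟨b, hb⟩ := ((tendsto_cdf_atTop μ).eventually (lt_mem_nhds one_half_lt_one)).exists
  obtain ⟨t, ht⟩ := intermediate_value_univ a b (continuous_cdf_of_nullSingletonClass μ)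
    ⟨ha.le, hb.le⟩
  have hIic : μ (Iic t) = 1 / 2 := by
    rw [← ofReal_cdf, ht, one_div, ENNReal.ofReal_inv_of_pos two_pos, ENNReal.ofReal_ofNat,
      one_div]
  refine ⟨t, hIic, ?_⟩
  rw [← compl_Iic, prob_compl_eq_one_sub measurableSet_Iic, hIic, one_div,
    ENNReal.one_sub_inv_two]

/-- Squaring `p - q` in `ℂ` identifies opposite directions, so this angle in `(-π, π]`
depends only on the line through `q` and `p`. -/
noncomputable def lineAngle (q p : ℝ × ℝ) : ℝ := arg (equivRealProdCLM.symm (p - q) ^ 2)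

lemma measurable_lineAngle (q : ℝ × ℝ) : Measurable (lineAngle q) :=
  measurable_arg.comp ((equivRealProdCLM.symm.continuous.comp
    (continuous_id.sub continuous_const)).pow 2).measurable

lemma lineAngle_add_smul (q p : ℝ × ℝ) {s : ℝ} (hs : s ≠ 0) :
    lineAngle q (q + s • (p - q)) = lineAngle q p := by
  have hs2 : 0 < s ^ 2 := by positivity
  simp only [lineAngle, add_sub_cancel_left, map_smul, real_smul, mul_pow]
  exact_mod_cast arg_real_mul _ hs2

lemma lineAngle_preimage_singleton_subset (q : ℝ × ℝ) (a : ℝ) :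
    lineAngle q ⁻¹' {a} ⊆ {x | ∃ s : ℝ, x = q + s • equivRealProdCLM (exp (a / 2 * I))} := by
  intro p hp
  set z := equivRealProdCLM.symm (p - q)
  have hsq : z ^ 2 = (‖z‖ * exp (a / 2 * I)) ^ 2 := by
    rw [← norm_mul_exp_arg_mul_I (z ^ 2), show arg (z ^ 2) = a from hp, mul_pow, ← exp_nat_mul,
      norm_pow]
    push_cast
    ring_nf
  have hp : p = q + equivRealProdCLM z := by
    rw [ContinuousLinearEquiv.apply_symm_apply, add_sub_cancel]
  generalize ‖z‖ = r at hsq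
  rcases sq_eq_sq_iff_eq_or_eq_neg.1 hsq with h | h
  · exact ⟨r, by rw [hp, h, ← real_smul, map_smul]⟩
  · exact ⟨-r, by rw [hp, h, ← neg_mul, ← ofReal_neg, ← real_smul, map_smul]⟩

lemma nullSingletonClass_map_lineAngle (D : Measure (ℝ × ℝ)) (q : ℝ × ℝ)
    (hline : ∀ v : ℝ × ℝ, v ≠ 0 → D {x : ℝ × ℝ | ∃ s : ℝ, x = q + s • v} = 0) :
    NullSingletonClass (D.map (lineAngle q)) where
  measure_singleton a := by
    rw [Measure.map_apply (measurable_lineAngle q) (measurableSet_singleton a)]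
    refine measure_mono_null (lineAngle_preimage_singleton_subset q a) (hline _ ?_)
    exact (map_ne_zero_iff _ equivRealProdCLM.injective).2 (exp_ne_zero _)

lemma setOf_exists_lineAngle_mem_subset (q : ℝ × ℝ) (A : Set ℝ) :
    {p | ∃ s : ℝ, q + s • (p - q) ∈ lineAngle q ⁻¹' A ∧ q + s • (p - q) ≠ q} ⊆
      lineAngle q ⁻¹' A := by
  rintro p ⟨s, hA, hq⟩
  have hs : s ≠ 0 := by rintro rfl; simp at hq
  rwa [mem_preimage, lineAngle_add_smul q p hs] at hA

/-- Let `D` be a continuous distribution on the plane (every line through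
`q` has measure zero) and `q` a fixed point. For every `ε > 0` there is a finite family
of cones with apex `q` partitioning the plane such that, for each cone `V` of the
family, the probability that the line through `q` and a random point `p` meets
`V \ {q}` is at most `1/2`. A cone with apex `q` is a set closed under positive
scaling around `q`; the line through `q` and `p` meets `V \ {q}` iff some point
`q + s • (p - q) ≠ q` lies in `V`. -/
theorem stmt4
    (D : Measure (ℝ × ℝ)) [IsProbabilityMeasure D] (q : ℝ × ℝ)
    (hcont : ∀ v : ℝ × ℝ, v ≠ 0 → D {x : ℝ × ℝ | ∃ s : ℝ, x = q + s • v} = 0) :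
    ∀ ε : ℝ, 0 < ε →
      ∃ (m : ℕ) (V : Fin m → Set (ℝ × ℝ)),
        (∀ i, ∀ p ∈ V i, ∀ s : ℝ, 0 < s → q + s • (p - q) ∈ V i) ∧
        (∀ i j, i ≠ j → Disjoint (V i) (V j)) ∧
        (⋃ i, V i) = Set.univ ∧
        ∀ i, D {p : ℝ × ℝ | ∃ s : ℝ, q + s • (p - q) ∈ V i ∧ q + s • (p - q) ≠ q}
          ≤ 1 / 2 := by
  intro _ _
  have := Measure.isProbabilityMeasure_map (μ := D) (measurable_lineAngle q).aemeasurable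
  have := nullSingletonClass_map_lineAngle D q hcont
  obtain ⟨t, hIic, hIoi⟩ := exists_measure_Iic_eq_half (D.map (lineAngle q))
  set A : Fin 2 → Set ℝ := ![Iic t, Ioi t]
  have hA : ∀ i, D (lineAngle q ⁻¹' A i) = 1 / 2 := by
    intro i
    rw [← Measure.map_apply (measurable_lineAngle q) (by fin_cases i <;> measurability)]
    fin_cases i <;> assumption
  refine ⟨2, fun i => lineAngle q ⁻¹' A i, ?_, ?_, ?_, fun i => ?_⟩
  · intro i p hp s hs
    rwa [mem_preimage, lineAngle_add_smul q p hs.ne']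
  · intro i j hij
    refine Disjoint.preimage _ ?_
    have := Iic_disjoint_Ioi (le_refl t)
    fin_cases i <;> fin_cases j <;> simp_all [A, this.symm]
  · ext p
    simp [A, le_or_gt]
  · exact (measure_mono (setOf_exists_lineAngle_mem_subset q (A i))).trans (hA i).le
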